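/- The kernel of the extension of D to the localization k[x,s,t,u,v]_x equals the k-subalgebra generated by x, f2/(2x^3), f3/(3x^6), f4/x, and 1/x, where f2 = 2x^3 t − s^2, f3 = 3x^6 u − 3x^3 t s + s^3, f4 = x v − s. -/

import Mathlib

/-! The five generators are constants of `D`; for `f₂, f₃, f₄` this is a direct computation.
Since `D s = x³` is a unit of `k[x,s,t,u,v]_x`, `D` acts on polynomials in `s` with constant
coefficients as `x³ · d/ds`, so in characteristic zero `s` is transcendental over the constants and
such a polynomial is a constant only if it has degree zero. The algebra `A` generated by the five
elements recovers the variables through `t = f₂/(2x³) + s²/(2x³)`, `u = f₃/(3x⁶) + ts/x³ - s³/(3x⁶)`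
and `v = f₄/x + s/x`, so the localization is `A[s]` and its constants are exactly `A`. -/

namespace Derivation

variable {K B : Type*} [CommRing K] [CommRing B] [Algebra K B]

def constants (D : Derivation K B B) : Subalgebra K B where
  carrier := {b | D b = 0}
  mul_mem' {a b} ha hb := by simp_all [D.leibniz]
  add_mem' ha hb := by simp_all
  algebraMap_mem' r := D.map_algebraMap r

variable (D : Derivation K B B)

@[simp]
theorem mem_constants {b : B} : b ∈ D.constants ↔ D b = 0 := Iff.rfl

@[simp]
theorem map_ofNat (n : ℕ) [n.AtLeastTwo] : D (ofNat(n) : B) = 0 := D.map_natCast n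

section Polynomial

open Polynomial

variable {p : B[X]}

theorem map_eval_of_coeff_mem_constants (hp : ∀ n, p.coeff n ∈ D.constants) (s : B) :
    D (p.eval s) = (derivative p).eval s * D s := by
  rw [eval_eq_sum, derivative_eval, Polynomial.sum, Polynomial.sum, map_sum, Finset.sum_mul]
  refine Finset.sum_congr rfl fun n _ => ?_
  rw [D.leibniz, D.mem_constants.1 (hp n), smul_zero, add_zero, D.leibniz_pow, smul_eq_mul,
    nsmul_eq_mul]
  ring

theorem coeff_derivative_mem_constants (hp : ∀ n, p.coeff n ∈ D.constants) (n : ℕ) :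
    (derivative p).coeff n ∈ D.constants := by
  rw [coeff_derivative]
  exact mul_mem (hp _) (add_mem (natCast_mem _ n) (one_mem _))

variable {s : B}

theorem eval_derivative_eq_zero_of_map_eval_eq_zero (hs : D s ∈ nonZeroDivisors B)
    (hp : ∀ n, p.coeff n ∈ D.constants) (h : D (p.eval s) = 0) : (derivative p).eval s = 0 := by
  rwa [← mul_right_mem_nonZeroDivisors_eq_zero_iff hs, ← D.map_eval_of_coeff_mem_constants hp]

variable [IsAddTorsionFree B]

theorem eq_zero_of_eval_eq_zero (hs : D s ∈ nonZeroDivisors B)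
    (hp : ∀ n, p.coeff n ∈ D.constants) (h : p.eval s = 0) : p = 0 := by
  induction hn : p.natDegree using Nat.strong_induction_on generalizing p with
  | _ n ih =>
    have hderiv : derivative p = 0 := by
      rcases eq_or_ne n 0 with rfl | hn0
      · exact derivative_eq_zero.2 hn
      · refine ih _ (hn ▸ natDegree_derivative_lt (hn ▸ hn0))
          (D.coeff_derivative_mem_constants hp) ?_ rfl
        exact D.eval_derivative_eq_zero_of_map_eval_eq_zero hs hp (by rw [h, map_zero])
    have hC := eq_C_of_derivative_eq_zero hderiv
    rw [hC, eval_C] at h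
    rw [hC, h, C_0]

theorem eval_eq_coeff_zero_of_map_eval_eq_zero (hs : D s ∈ nonZeroDivisors B)
    (hp : ∀ n, p.coeff n ∈ D.constants) (h : D (p.eval s) = 0) : p.eval s = p.coeff 0 := by
  have hderiv : derivative p = 0 := D.eq_zero_of_eval_eq_zero hs
    (D.coeff_derivative_mem_constants hp) (D.eval_derivative_eq_zero_of_map_eval_eq_zero hs hp h)
  conv_lhs => rw [eq_C_of_derivative_eq_zero hderiv, eval_C]

theorem mem_of_mem_adjoin_of_mem_constants (hs : D s ∈ nonZeroDivisors B)
    {S : Subalgebra K B} (hS : S ≤ D.constants) {a : B} (ha : a ∈ Algebra.adjoin S {s})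
    (hDa : a ∈ D.constants) : a ∈ S := by
  rw [Algebra.adjoin_singleton_eq_range_aeval] at ha
  obtain ⟨q, rfl⟩ := ha
  change aeval s q ∈ D.constants at hDa
  change aeval s q ∈ S
  have hq : ∀ n, (q.map (algebraMap S B)).coeff n ∈ D.constants := fun n => by
    rw [coeff_map]; exact hS (q.coeff n).2
  rw [← eval_map_algebraMap] at hDa ⊢
  rw [D.eval_eq_coeff_zero_of_map_eval_eq_zero hs hq hDa, coeff_map]
  exact (q.coeff 0).2

end Polynomial

end Derivation

theorem IsLocalization.Away.mem_of_algebraMap_mem {R A : Type*} [CommSemiring R]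
    [CommSemiring A] [Algebra R A] {r : R} [IsLocalization.Away r A] {T : Subsemiring A} {ix : A}
    (hix : ix * algebraMap R A r = 1) (hixT : ix ∈ T) (hT : ∀ p, algebraMap R A p ∈ T)
    (a : A) : a ∈ T := by
  obtain ⟨n, p, hp⟩ := IsLocalization.Away.surj r a
  have ha : a = algebraMap R A p * ix ^ n := by
    rw [← hp, mul_assoc, ← mul_pow, mul_comm _ ix, hix, one_pow, mul_one]
  rw [ha]
  exact mul_mem (hT p) (pow_mem hixT n)

open MvPolynomial

theorem IsLocalization.Away.mem_of_algebraMap_C_mem_of_algebraMap_X_mem {σ R A : Type*}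
    [CommSemiring R] [CommSemiring A] [Algebra (MvPolynomial σ R) A] {r : MvPolynomial σ R}
    [IsLocalization.Away r A] {T : Subsemiring A} {ix : A}
    (hix : ix * algebraMap (MvPolynomial σ R) A r = 1) (hixT : ix ∈ T)
    (hC : ∀ c, algebraMap (MvPolynomial σ R) A (C c) ∈ T)
    (hX : ∀ i, algebraMap (MvPolynomial σ R) A (X i) ∈ T) (a : A) : a ∈ T := by
  refine IsLocalization.Away.mem_of_algebraMap_mem hix hixT (fun p => ?_) a
  induction p using MvPolynomial.induction_on with
  | C c => exact hC c
  | add p q hp hq => rw [map_add]; exact add_mem hp hq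
  | mul_X p i hp => rw [map_mul]; exact mul_mem hp (hX i)

namespace DaigleFreudenburg

variable (K : Type*) [Field K]

noncomputable section

def f₂ : MvPolynomial (Fin 5) K := 2 * X 0 ^ 3 * X 2 - X 1 ^ 2

def f₃ : MvPolynomial (Fin 5) K := 3 * X 0 ^ 6 * X 3 - 3 * X 0 ^ 3 * X 2 * X 1 + X 1 ^ 3

def f₄ : MvPolynomial (Fin 5) K := X 0 * X 4 - X 1

def generators (ix : Localization.Away (X 0 : MvPolynomial (Fin 5) K)) :
    Set (Localization.Away (X 0 : MvPolynomial (Fin 5) K)) :=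
  {algebraMap (MvPolynomial (Fin 5) K) _ (X 0),
    algebraMap (MvPolynomial (Fin 5) K) _ (C (2⁻¹ : K) * f₂ K) * ix ^ 3,
    algebraMap (MvPolynomial (Fin 5) K) _ (C (3⁻¹ : K) * f₃ K) * ix ^ 6,
    algebraMap (MvPolynomial (Fin 5) K) _ (f₄ K) * ix, ix}

end

variable {K} (D : Derivation K (MvPolynomial (Fin 5) K) (MvPolynomial (Fin 5) K))

theorem map_f₂ (hx : D (X 0) = 0) (hs : D (X 1) = X 0 ^ 3) (ht : D (X 2) = X 1) :
    D (f₂ K) = 0 := by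
  simp [f₂, D.leibniz, D.leibniz_pow, hx, hs, ht]
  ring

theorem map_f₃ (hx : D (X 0) = 0) (hs : D (X 1) = X 0 ^ 3) (ht : D (X 2) = X 1)
    (hu : D (X 3) = X 2) : D (f₃ K) = 0 := by
  simp [f₃, D.leibniz, D.leibniz_pow, hx, hs, ht, hu]
  ring

theorem map_f₄ (hx : D (X 0) = 0) (hs : D (X 1) = X 0 ^ 3) (hv : D (X 4) = X 0 ^ 2) :
    D (f₄ K) = 0 := by
  simp [f₄, D.leibniz, hx, hs, hv]
  ring

variable (D' : Derivation K (Localization.Away (X 0 : MvPolynomial (Fin 5) K))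
  (Localization.Away (X 0 : MvPolynomial (Fin 5) K)))

theorem adjoin_generators_le_constants (hx : D (X 0) = 0) (hs : D (X 1) = X 0 ^ 3)
    (ht : D (X 2) = X 1) (hu : D (X 3) = X 2) (hv : D (X 4) = X 0 ^ 2)
    (hext : ∀ f : MvPolynomial (Fin 5) K,
      D' (algebraMap (MvPolynomial (Fin 5) K) _ f) = algebraMap (MvPolynomial (Fin 5) K) _ (D f))
    {ix : Localization.Away (X 0 : MvPolynomial (Fin 5) K)}
    (hix : ix * algebraMap (MvPolynomial (Fin 5) K) _ (X 0) = 1) :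
    Algebra.adjoin K (generators K ix) ≤ D'.constants := by
  have hconst : ∀ f, D f = 0 → algebraMap (MvPolynomial (Fin 5) K) _ f ∈ D'.constants :=
    fun f hf => by simp [hext, hf]
  have hCmul : ∀ (c : K) f, D f = 0 → D (C c * f) = 0 := fun c f hf => by simp [C_mul', hf]
  have hix' : ix ∈ D'.constants := by simp [D'.leibniz_of_mul_eq_one hix, hext, hx]
  rw [Algebra.adjoin_le_iff]
  simp only [generators, Set.insert_subset_iff, Set.singleton_subset_iff, SetLike.mem_coe]
  exact ⟨hconst _ hx, mul_mem (hconst _ (hCmul _ _ (map_f₂ D hx hs ht))) (pow_mem hix' 3),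
    mul_mem (hconst _ (hCmul _ _ (map_f₃ D hx hs ht hu))) (pow_mem hix' 6),
    mul_mem (hconst _ (map_f₄ D hx hs hv)) hix', hix'⟩

theorem X_zero_mul_X_four : X 0 * X 4 = f₄ K + X 1 := by
  rw [f₄]
  ring

section CharZero

variable [CharZero K]

theorem X_zero_pow_three_mul_X_two :
    X 0 ^ 3 * X 2 = C (2⁻¹ : K) * f₂ K + C 2⁻¹ * X 1 ^ 2 := by
  have h : (C (2⁻¹ : K) : MvPolynomial (Fin 5) K) * 2 = 1 := by
    rw [← map_ofNat C 2, ← C_mul, inv_mul_cancel₀ two_ne_zero, C_1]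
  rw [f₂]
  linear_combination (-(X 0 ^ 3 * X 2)) * h

theorem X_zero_pow_six_mul_X_three :
    X 0 ^ 6 * X 3 = C (3⁻¹ : K) * f₃ K + X 0 ^ 3 * X 2 * X 1 - C 3⁻¹ * X 1 ^ 3 := by
  have h : (C (3⁻¹ : K) : MvPolynomial (Fin 5) K) * 3 = 1 := by
    rw [← map_ofNat C 3, ← C_mul, inv_mul_cancel₀ three_ne_zero, C_1]
  rw [f₃]
  linear_combination (X 0 ^ 3 * X 2 * X 1 - X 0 ^ 6 * X 3) * h

theorem mem_adjoin_adjoin_generators {ix : Localization.Away (X 0 : MvPolynomial (Fin 5) K)}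
    (hix : ix * algebraMap (MvPolynomial (Fin 5) K) _ (X 0) = 1)
    (a : Localization.Away (X 0 : MvPolynomial (Fin 5) K)) :
    a ∈ Algebra.adjoin (Algebra.adjoin K (generators K ix))
      {algebraMap (MvPolynomial (Fin 5) K) _ (X 1)} := by
  set φ := algebraMap (MvPolynomial (Fin 5) K) (Localization.Away (X 0 : MvPolynomial (Fin 5) K))
  set S := Algebra.adjoin K (generators K ix)
  set W := Algebra.adjoin S {φ (X 1)}
  have hS : ∀ b ∈ S, b ∈ W := fun b hb => W.algebraMap_mem ⟨b, hb⟩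
  have hgen : ∀ b ∈ generators K ix, b ∈ W := fun b hb => hS b (Algebra.subset_adjoin hb)
  have hC : ∀ c, φ (C c) ∈ W := fun c => hS _ <| by
    rw [← algebraMap_eq, ← IsScalarTower.algebraMap_apply]
    exact S.algebraMap_mem c
  have hx : φ (X 0) ∈ W := hgen _ (.inl rfl)
  have hix' : ix ∈ W := hgen _ (.inr (.inr (.inr (.inr rfl))))
  have hs : φ (X 1) ∈ W := Algebra.subset_adjoin rfl
  have hmul : ∀ f n, φ f * ix ^ n ∈ W → φ f ∈ W := fun f n h => by
    rw [← mul_one (φ f), ← one_pow n, ← hix, mul_pow, ← mul_assoc]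
    exact mul_mem h (pow_mem hx n)
  have hdiv : ∀ g n, φ (X 0 ^ n * g) ∈ W → φ g ∈ W := fun g n h => by
    rw [← one_mul (φ g), ← one_pow n, ← hix, mul_pow, mul_assoc, ← map_pow, ← map_mul]
    exact mul_mem (pow_mem hix' n) h
  have ht : φ (X 2) ∈ W := hdiv _ 3 <| by
    rw [X_zero_pow_three_mul_X_two, map_add, map_mul φ (C _) (X 1 ^ 2), map_pow]
    exact add_mem (hmul _ 3 (hgen _ (.inr (.inl rfl)))) (mul_mem (hC _) (pow_mem hs 2))
  have hu : φ (X 3) ∈ W := hdiv _ 6 <| by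
    rw [X_zero_pow_six_mul_X_three, map_sub, map_add, map_mul φ (C _) (X 1 ^ 3),
      map_mul φ (X 0 ^ 3 * X 2), map_mul φ (X 0 ^ 3), map_pow, map_pow]
    refine sub_mem (add_mem (hmul _ 6 (hgen _ (.inr (.inr (.inl rfl))))) ?_) ?_
    · exact mul_mem (mul_mem (pow_mem hx 3) ht) hs
    · exact mul_mem (hC _) (pow_mem hs 3)
  have hv : φ (X 4) ∈ W := hdiv _ 1 <| by
    rw [pow_one, X_zero_mul_X_four, map_add]
    exact add_mem (hmul _ 1 (by rw [pow_one]; exact hgen _ (.inr (.inr (.inr (.inl rfl)))))) hs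
  refine IsLocalization.Away.mem_of_algebraMap_C_mem_of_algebraMap_X_mem (T := W.toSubsemiring)
    hix hix' hC (fun i => ?_) a
  fin_cases i <;> assumption

end CharZero

end DaigleFreudenburg

theorem daigle_freudenburg_localized_kernel
    (K : Type*) [Field K] [CharZero K]
    (D : Derivation K (MvPolynomial (Fin 5) K) (MvPolynomial (Fin 5) K))
    (hx : D (X 0) = 0) (hs : D (X 1) = X 0 ^ 3) (ht : D (X 2) = X 1)
    (hu : D (X 3) = X 2) (hv : D (X 4) = X 0 ^ 2)
    (D' : Derivation K (Localization.Away (X 0 : MvPolynomial (Fin 5) K))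
        (Localization.Away (X 0 : MvPolynomial (Fin 5) K)))
    (hext : ∀ f : MvPolynomial (Fin 5) K,
        D' (algebraMap (MvPolynomial (Fin 5) K) _ f)
          = algebraMap (MvPolynomial (Fin 5) K) _ (D f))
    (ix : Localization.Away (X 0 : MvPolynomial (Fin 5) K))
    (hix : ix * algebraMap (MvPolynomial (Fin 5) K) _ (X 0) = 1)
    (f₂ f₃ f₄ : MvPolynomial (Fin 5) K)
    (hf₂ : f₂ = 2 * X 0 ^ 3 * X 2 - X 1 ^ 2)
    (hf₃ : f₃ = 3 * X 0 ^ 6 * X 3 - 3 * X 0 ^ 3 * X 2 * X 1 + X 1 ^ 3)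
    (hf₄ : f₄ = X 0 * X 4 - X 1) :
    ∀ a : Localization.Away (X 0 : MvPolynomial (Fin 5) K),
      D' a = 0 ↔
        a ∈ Algebra.adjoin K
          ({algebraMap (MvPolynomial (Fin 5) K) _ (X 0),
            algebraMap (MvPolynomial (Fin 5) K) _ (C (2⁻¹ : K) * f₂) * ix ^ 3,
            algebraMap (MvPolynomial (Fin 5) K) _ (C (3⁻¹ : K) * f₃) * ix ^ 6,
            algebraMap (MvPolynomial (Fin 5) K) _ f₄ * ix,
            ix} : Set (Localization.Away (X 0 : MvPolynomial (Fin 5) K))) := by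
  subst hf₂ hf₃ hf₄
  have : IsAddTorsionFree (Localization.Away (X 0 : MvPolynomial (Fin 5) K)) := .of_module_rat _
  have hS := DaigleFreudenburg.adjoin_generators_le_constants D D' hx hs ht hu hv hext hix
  have hDs : D' (algebraMap (MvPolynomial (Fin 5) K) _ (X 1)) ∈ nonZeroDivisors _ := by
    rw [hext, hs, map_pow]
    exact ((IsLocalization.Away.algebraMap_isUnit _).pow 3).mem_nonZeroDivisors
  intro a
  exact ⟨fun ha => D'.mem_of_mem_adjoin_of_mem_constants hDs hS
    (DaigleFreudenburg.mem_adjoin_adjoin_generators hix a) ha, fun ha => hS ha⟩
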